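/- Let N be a level-2 network consistent with a dense triplet set T, let T' = CutInduce(N,T) be the induced triplet set on the leaf set of Collapse(N). If N' is any network consistent with T', then the network obtained from N' by expanding each collapsed leaf V back into the subnetwork of N below the corresponding highest cut-arc is consistent with T. -/

import Mathlib

/-!
Every leaf of `R` lies below a highest cut-arc, the subnetworks below distinct highest cut-arcs
are disjoint, and a path entering the subnetwork below a cut-arc `(u₀, v₀)` from outside passes
through `v₀`. Let the leaves `x, y, z` of a triplet `xy|z` lie below the collapsed leaves
`a, b, c` of `R'`. If `a, b, c` are distinct, a witness of `ab|c` in `R'`, continued by paths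
inside the subnetworks, is a witness in the expansion. If `a = b = c`, the witness of `xy|z` in
`R` lies entirely inside the subnetwork of `a`. If `a = b ≠ c`, only its split vertex for `x, y`
does, and the rest is rerouted through a vertex of `R'` branching to `a` and `c`. The cases
`a = c ≠ b` and `b = c ≠ a` cannot occur, since two internally disjoint paths would enter the
same subnetwork. A degenerate triplet `xx|z` only needs some vertex with internally disjoint
paths to `x` and `z`.
-/

namespace Phylo

variable {V : Type*}

/-- In-degree of a vertex in a directed graph given by relation `R`. -/
noncomputable def inDeg (R : V → V → Prop) (v : V) : ℕ := {u | R u v}.ncard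

/-- Out-degree of a vertex. -/
noncomputable def outDeg (R : V → V → Prop) (v : V) : ℕ := {w | R v w}.ncard

/-- A phylogenetic network: an acyclic digraph with a unique root of indegree 0 and
outdegree 2, in which every vertex is the root, a split vertex (indeg 1, outdeg 2),
a recombination vertex (indeg 2, outdeg 1) or a leaf (indeg 1, outdeg 0). -/
def IsPhyloNet (R : V → V → Prop) : Prop :=
  (∀ v, ¬ Relation.TransGen R v v) ∧
  (∃! r, inDeg R r = 0) ∧
  (∀ v : V, (inDeg R v = 0 ∧ outDeg R v = 2) ∨ (inDeg R v = 1 ∧ outDeg R v = 2) ∨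
    (inDeg R v = 2 ∧ outDeg R v = 1) ∨ (inDeg R v = 1 ∧ outDeg R v = 0))

/-- A leaf is a vertex of outdegree 0. -/
def IsLf (R : V → V → Prop) (v : V) : Prop := outDeg R v = 0

/-- The set of leaves of a network. -/
def netLeaves (R : V → V → Prop) : Set V := {v | IsLf R v}

/-- `p` is a directed path (as a nonempty list of vertices) from `a` to `b`. -/
def IsPth (R : V → V → Prop) (p : List V) (a b : V) : Prop :=
  p ≠ [] ∧ p.head? = some a ∧ p.getLast? = some b ∧ p.Chain' R

/-- Internal vertices of a path. -/
def interior (p : List V) : List V := p.tail.dropLast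

/-- Two paths are internally vertex-disjoint. -/
def IntDisj (p q : List V) : Prop :=
  (∀ v ∈ interior p, v ∉ q) ∧ (∀ v ∈ interior q, v ∉ p)

/-- The triplet xy|z is consistent with the network `R`: there are `u ≠ v` and pairwise
internally vertex-disjoint paths `u→x`, `u→y`, `v→u`, `v→z`. -/
def ConsistentTrip (R : V → V → Prop) (x y z : V) : Prop :=
  ∃ u v : V, ∃ p1 p2 p3 p4 : List V, u ≠ v ∧
    IsPth R p1 u x ∧ IsPth R p2 u y ∧ IsPth R p3 v u ∧ IsPth R p4 v z ∧
    IntDisj p1 p2 ∧ IntDisj p1 p3 ∧ IntDisj p1 p4 ∧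
    IntDisj p2 p3 ∧ IntDisj p2 p4 ∧ IntDisj p3 p4

/-- `(x,y,z) ∈ T` codes the rooted triplet xy|z; `trip T x y z` says xy|z ∈ T
(taking into account the symmetry xy|z = yx|z). -/
def trip (T : Set (V × V × V)) (x y z : V) : Prop := (x, y, z) ∈ T ∨ (y, x, z) ∈ T

/-- The leaf set L(T) of a triplet set. -/
def tripLeaves (T : Set (V × V × V)) : Set V :=
  {a | ∃ t ∈ T, a = t.1 ∨ a = t.2.1 ∨ a = t.2.2}

/-- `T` is dense: every 3-element subset of L(T) supports at least one triplet of `T`. -/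
def DenseT (T : Set (V × V × V)) : Prop :=
  ∀ x y z, x ∈ tripLeaves T → y ∈ tripLeaves T → z ∈ tripLeaves T →
    x ≠ y → x ≠ z → y ≠ z → trip T x y z ∨ trip T x z y ∨ trip T y z x

/-- An SN-set of `T`: a subset of L(T) closed under the operation
`S_T(X) = X ∪ {c | ∃ x y ∈ X, xc|y ∈ T}`. -/
def IsSNSet (T : Set (V × V × V)) (Y : Set V) : Prop :=
  Y ⊆ tripLeaves T ∧
    ∀ ⦃c x y : V⦄, x ∈ Y → y ∈ Y → c ∈ tripLeaves T → trip T x c y → c ∈ Y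

/-- `SN T X`: the closure of `X` under `S_T`, i.e. the smallest SN-superset of `X`. -/
def SN (T : Set (V × V × V)) (X : Set V) : Set V := ⋂₀ {Y | X ⊆ Y ∧ IsSNSet T Y}

/-- A maximal SN-set: a proper SN-set such that the only SN-set strictly containing
it is L(T) itself. -/
def MaxSN (T : Set (V × V × V)) (S : Set V) : Prop :=
  IsSNSet T S ∧ S ≠ tripLeaves T ∧ ∀ Y, IsSNSet T Y → S ⊂ Y → Y = tripLeaves T

/-- A network is consistent with a triplet set if it is consistent with every triplet. -/
def ConsistentSet (R : V → V → Prop) (T : Set (V × V × V)) : Prop :=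
  ∀ t ∈ T, ConsistentTrip R t.1 t.2.1 t.2.2

/-- A cut-arc: an arc whose removal disconnects the underlying undirected graph. -/
def CutArc (R : V → V → Prop) (u v : V) : Prop :=
  R u v ∧ ∃ a b : V, ¬ Relation.ReflTransGen
    (fun p q => (R p q ∨ R q p) ∧ ¬((p = u ∧ q = v) ∨ (p = v ∧ q = u))) a b

/-- The set of leaves below the arc `(u,v)`: leaves reachable from `v`. -/
def leavesBelow (R : V → V → Prop) (u v : V) : Set V :=
  {ℓ | IsLf R ℓ ∧ Relation.ReflTransGen R v ℓ}

/-- A highest cut-arc: a cut-arc `(u,v)` such that there is no cut-arc `(u',v')`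
with `u` reachable from `v'`. -/
def HighestCutArc (R : V → V → Prop) (u v : V) : Prop :=
  CutArc R u v ∧ ∀ u' v', CutArc R u' v' → ¬ Relation.ReflTransGen R v' u

/-- The subset `S` is connected in the underlying undirected graph. -/
def ConnOn (R : V → V → Prop) (S : Set V) : Prop :=
  ∀ a ∈ S, ∀ b ∈ S,
    Relation.ReflTransGen (fun p q => p ∈ S ∧ q ∈ S ∧ (R p q ∨ R q p)) a b

/-- `S` induces a biconnected subgraph containing at least one arc. -/
def BiconnSet (R : V → V → Prop) (S : Set V) : Prop :=
  (∃ a ∈ S, ∃ b ∈ S, R a b) ∧ ConnOn R S ∧ ∀ w ∈ S, ConnOn R (S \ {w})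

/-- A biconnected component: a maximal biconnected vertex set. -/
def IsBCC (R : V → V → Prop) (S : Set V) : Prop :=
  BiconnSet R S ∧ ∀ S', BiconnSet R S' → S ⊆ S' → S' = S

/-- A level-k network: every biconnected component has at most `k` recombination
vertices. -/
def LevelK (k : ℕ) (R : V → V → Prop) : Prop :=
  ∀ S, IsBCC R S → ({v ∈ S | inDeg R v = 2}).ncard ≤ k

/-- A valid (non-redundant) network: every nontrivial biconnected component has at
least three outgoing arcs. -/
def GoodNet (R : V → V → Prop) : Prop :=
  IsPhyloNet R ∧ ∀ S, IsBCC R S → 3 ≤ S.ncard →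
    3 ≤ {p : V × V | R p.1 p.2 ∧ p.1 ∈ S ∧ p.2 ∉ S}.ncard

end Phylo
namespace Phylo

/-- The expansion of the network `R'` (whose leaves correspond, via `g`, to the
highest cut-arcs of `N = R`): each leaf `b` of `R'` is replaced by the subnetwork of
`R` rooted at the target `(g b).2` of the corresponding highest cut-arc. -/
def ExpandArc {V' V : Type*} (R' : V' → V' → Prop) (R : V → V → Prop)
    (g : V' → V × V) : V' ⊕ V → V' ⊕ V → Prop
  | Sum.inl a, Sum.inl b => R' a b ∧ ¬ IsLf R' b
  | Sum.inl a, Sum.inr v => ∃ b, R' a b ∧ IsLf R' b ∧ v = (g b).2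
  | Sum.inr a, Sum.inr b => R a b ∧ ∃ c, IsLf R' c ∧ Relation.ReflTransGen R (g c).2 a
  | Sum.inr _, Sum.inl _ => False

end Phylo

namespace Phylo

open Relation

section Paths

variable {α β : Type*} {S : α → α → Prop} {p q : List α} {a b c d v w x z : α}

lemma isPth_singleton (a : α) : IsPth S [a] a a :=
  ⟨List.cons_ne_nil a [], rfl, rfl, List.isChain_singleton a⟩

lemma isPth_pair (h : S a b) : IsPth S [a, b] a b :=
  ⟨List.cons_ne_nil a _, rfl, rfl, List.isChain_pair.mpr h⟩

lemma IsPth.exists_eq_cons (h : IsPth S p a b) : ∃ t, p = a :: t := by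
  obtain ⟨hne, hh, -, -⟩ := h
  cases p with
  | nil => exact absurd rfl hne
  | cons x t => exact ⟨t, by simpa using hh⟩

lemma IsPth.isChain (h : IsPth S p a b) : p.IsChain S := h.2.2.2

lemma IsPth.getLast_eq (h : IsPth S p a b) : p.getLast h.1 = b :=
  Option.some_injective _ ((List.getLast?_eq_some_getLast h.1).symm.trans h.2.2.1)

lemma IsPth.eq_dropLast_append (h : IsPth S p a b) : p = p.dropLast ++ [b] := by
  conv_lhs => rw [← List.dropLast_append_getLast h.1, h.getLast_eq]

lemma IsPth.last_mem (h : IsPth S p a b) : b ∈ p :=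
  h.getLast_eq ▸ List.getLast_mem h.1

lemma IsPth.reflTransGen (h : IsPth S p a b) (hw : w ∈ p) : ReflTransGen S a w := by
  obtain ⟨t, rfl⟩ := h.exists_eq_cons
  exact List.IsChain.induction (ReflTransGen S a ·) _ h.isChain
    (fun _ _ hxy hx => hx.tail hxy) (fun _ => .refl) w hw

lemma IsPth.nodup (hS : ∀ v, ¬ TransGen S v v) (h : IsPth S p a b) : p.Nodup :=
  haveI : Std.Irrefl (TransGen S) := ⟨hS⟩
  (h.isChain.imp fun _ _ => TransGen.single).pairwise.nodup

lemma exists_isPth (h : ReflTransGen S a b) : ∃ p, IsPth S p a b := by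
  obtain ⟨t, ht, hb⟩ := List.exists_isChain_cons_of_relationReflTransGen h
  exact ⟨a :: t, List.cons_ne_nil a t, rfl, hb ▸ List.getLast?_eq_some_getLast _, ht⟩

lemma IsPth.append (h : IsPth S p a b) (h' : IsPth S q c d) (hbc : S b c) :
    IsPth S (p ++ q) a d := by
  obtain ⟨t, rfl⟩ := h.exists_eq_cons
  obtain ⟨s, rfl⟩ := h'.exists_eq_cons
  refine ⟨by simp, rfl, ?_, List.isChain_append.mpr ⟨h.isChain, h'.isChain, ?_⟩⟩
  · rw [List.getLast?_append_of_ne_nil _ (List.cons_ne_nil _ _)]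
    exact h'.2.2.1
  · rintro x hx y hy
    rw [h.2.2.1] at hx
    simp only [Option.mem_def, Option.some.injEq, List.head?_cons] at hx hy
    exact hx ▸ hy ▸ hbc

lemma IsPth.dropLast (h : IsPth S p a b) (hab : a ≠ b) :
    ∃ m, IsPth S p.dropLast a m ∧ S m b := by
  have hp := h.eq_dropLast_append
  have hne : p.dropLast ≠ [] := by
    intro h0
    rw [h0] at hp
    exact hab (by simpa [hp] using h.2.1.symm)
  have hch : (p.dropLast ++ [b]).IsChain S := by rw [← hp]; exact h.isChain
  have hhead := h.2.1
  rw [List.isChain_append] at hch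
  rw [hp, List.head?_append_of_ne_nil _ hne] at hhead
  exact ⟨_, ⟨hne, hhead, List.getLast?_eq_some_getLast hne, hch.1⟩,
    hch.2.2 _ (List.getLast?_eq_some_getLast hne) b rfl⟩

lemma IsPth.dropLast_ne_nil (h : IsPth S p a b) (hab : a ≠ b) : p.dropLast ≠ [] :=
  (h.dropLast hab).choose_spec.1.1

lemma exists_rel_of_mem_dropLast (h : p.IsChain S) (hw : w ∈ p.dropLast) : ∃ t, S w t := by
  induction p with
  | nil => simp at hw
  | cons x t ih =>
    cases t with
    | nil => simp at hw
    | cons y s =>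
      rw [List.isChain_cons_cons] at h
      rcases List.mem_cons.mp (by simpa using hw) with rfl | hw'
      · exact ⟨y, h.1⟩
      · exact ih h.2 hw'

lemma IsPth.exists_suffix (h : IsPth S p a b) (hw : w ∈ p) : ∃ q, IsPth S q w b ∧ q <:+ p := by
  obtain ⟨s, t, rfl⟩ := List.append_of_mem hw
  refine ⟨w :: t, ⟨List.cons_ne_nil _ _, rfl, ?_, (List.isChain_append.mp h.isChain).2.1⟩,
    List.suffix_append _ _⟩
  have hl := h.2.2.1
  rwa [List.getLast?_append_of_ne_nil _ (List.cons_ne_nil _ _)] at hl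

lemma interior_subset_dropLast (p : List α) : interior p ⊆ p.dropLast := by
  rw [interior, ← List.tail_dropLast]
  exact List.tail_subset _

lemma interior_subset (p : List α) : interior p ⊆ p :=
  fun _ hw => List.dropLast_subset _ (interior_subset_dropLast p hw)

lemma interior_map (f : α → β) (p : List α) : interior (p.map f) = (interior p).map f := by
  rw [interior, interior, ← List.map_tail, List.map_dropLast]

lemma IsPth.mem_cases (h : IsPth S p a b) (hw : w ∈ p) : w = a ∨ w = b ∨ w ∈ interior p := by
  obtain ⟨t, rfl⟩ := h.exists_eq_cons
  rcases List.mem_cons.mp hw with rfl | hw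
  · exact Or.inl rfl
  have ht : t ≠ [] := List.ne_nil_of_mem hw
  have hb : t.getLast ht = b := by rw [← List.getLast_cons ht]; exact h.getLast_eq
  rw [← List.dropLast_append_getLast ht, hb, List.mem_append, List.mem_singleton] at hw
  exact Or.inr hw.symm

lemma IsPth.last_notMem_dropLast (hS : ∀ v, ¬ TransGen S v v) (h : IsPth S p a b) :
    b ∉ p.dropLast := by
  have hnd := h.nodup hS
  rw [h.eq_dropLast_append] at hnd
  exact fun hb => List.disjoint_of_nodup_append hnd hb (List.mem_singleton_self b)

lemma IsPth.ne_of_mem_interior (hS : ∀ v, ¬ TransGen S v v) (h : IsPth S p a b)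
    (hw : w ∈ interior p) : w ≠ a ∧ w ≠ b := by
  refine ⟨?_, fun hwb => h.last_notMem_dropLast hS (hwb ▸ interior_subset_dropLast p hw)⟩
  obtain ⟨t, rfl⟩ := h.exists_eq_cons
  rintro rfl
  exact (List.nodup_cons.mp (h.nodup hS)).1 (List.dropLast_subset _ hw)

lemma notMem_interior_of_forall_not_rel (hx : ∀ y, ¬ S x y) (h : IsPth S p a b) :
    x ∉ interior p := fun hp =>
  let ⟨t, ht⟩ := exists_rel_of_mem_dropLast h.isChain (interior_subset_dropLast p hp)
  hx t ht

lemma IntDisj.symm (h : IntDisj p q) : IntDisj q p := ⟨h.2, h.1⟩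

lemma IntDisj.map {f : α → β} (hf : Function.Injective f) (h : IntDisj p q) :
    IntDisj (p.map f) (q.map f) := by
  constructor <;>
  · intro w hw hw'
    rw [interior_map] at hw
    obtain ⟨w₀, hw₀, rfl⟩ := List.mem_map.mp hw
    rw [List.mem_map_of_injective hf] at hw'
    first | exact h.1 w₀ hw₀ hw' | exact h.2 w₀ hw₀ hw'

lemma IsPth.exists_shorter (hS : ∀ v, ¬ TransGen S v v) (hp : IsPth S p v x)
    (hq : IsPth S q v z) (hw : w ∈ interior p) (hw' : w ∈ q) :
    ∃ p' q', IsPth S p' w x ∧ IsPth S q' w z ∧ p'.length + q'.length < p.length + q.length := by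
  obtain ⟨p', hp', hpp⟩ := hp.exists_suffix (interior_subset p hw)
  obtain ⟨q', hq', hqq⟩ := hq.exists_suffix hw'
  have hne : p'.length ≠ p.length := fun hlen =>
    (hp.ne_of_mem_interior hS hw).1 (Option.some_injective _
      (hp'.2.1.symm.trans ((hpp.eq_of_length hlen) ▸ hp.2.1)))
  exact ⟨p', q', hp', hq', by have := hpp.length_le; have := hqq.length_le; omega⟩

/-- A pair of paths of minimal total length has no shared interior vertex, since that vertex
would start a shorter pair. -/
lemma exists_intDisj_of_reflTransGen (hS : ∀ v, ¬ TransGen S v v) (hx : ReflTransGen S w x)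
    (hz : ReflTransGen S w z) :
    ∃ v p q, ReflTransGen S w v ∧ IsPth S p v x ∧ IsPth S q v z ∧ IntDisj p q := by
  classical
  have hP : ∃ n, ∃ v p q, ReflTransGen S w v ∧ IsPth S p v x ∧ IsPth S q v z ∧
      p.length + q.length = n := by
    obtain ⟨p, hp⟩ := exists_isPth hx
    obtain ⟨q, hq⟩ := exists_isPth hz
    exact ⟨_, w, p, q, .refl, hp, hq, rfl⟩
  obtain ⟨v, p, q, hwv, hp, hq, hlen⟩ := Nat.find_spec hP
  refine ⟨v, p, q, hwv, hp, hq, fun u hu hu' => ?_, fun u hu hu' => ?_⟩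
  · obtain ⟨p', q', hp', hq', hlt⟩ := hp.exists_shorter hS hq hu hu'
    exact Nat.find_min hP (hlen ▸ hlt)
      ⟨u, p', q', hwv.trans (hp.reflTransGen (interior_subset p hu)), hp', hq', rfl⟩
  · obtain ⟨q', p', hq', hp', hlt⟩ := hq.exists_shorter hS hp hu hu'
    exact Nat.find_min hP (by omega)
      ⟨u, p', q', hwv.trans (hq.reflTransGen (interior_subset q hu)), hp', hq', rfl⟩

lemma ConsistentTrip.swap (h : ConsistentTrip S x z w) : ConsistentTrip S z x w := by
  obtain ⟨u, v, p1, p2, p3, p4, huv, h1, h2, h3, h4, h12, h13, h14, h23, h24, h34⟩ := h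
  exact ⟨u, v, p2, p1, p3, p4, huv, h2, h1, h3, h4, h12.symm, h23, h24, h13, h14, h34⟩

lemma consistentTrip_of_intDisj (hx : ∀ y, ¬ S x y) (hvx : v ≠ x) (hp : IsPth S p v x)
    (hq : IsPth S q v z) (hpq : IntDisj p q) : ConsistentTrip S x x z := by
  have hsingle : ∀ {r : List α} {s t : α}, IsPth S r s t → IntDisj [x] r := fun hr =>
    ⟨by simp [interior], fun w hw hw' =>
      notMem_interior_of_forall_not_rel hx hr (List.mem_singleton.mp hw' ▸ hw)⟩
  exact ⟨x, v, [x], [x], p, q, hvx.symm, isPth_singleton x, isPth_singleton x, hp, hq,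
    hsingle (isPth_singleton x), hsingle hp, hsingle hq, hsingle hp, hsingle hq, hpq⟩

end Paths

section Network

variable {V : Type*} {R : V → V → Prop} {p q : List V} {a b u v w x y z ℓ : V}

lemma not_reflTransGen_of_rel (hR : ∀ v, ¬ TransGen R v v) (h : R a b) :
    ¬ ReflTransGen R b a :=
  fun h' => hR a (TransGen.head' h h')

lemma reflTransGen_antisymm (hR : ∀ v, ¬ TransGen R v v) (h : ReflTransGen R a b)
    (h' : ReflTransGen R b a) : a = b :=
  h.cases_head.resolve_right fun ⟨_, hc, hcb⟩ => not_reflTransGen_of_rel hR hc (hcb.trans h')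

lemma wellFounded_transGen [Finite V] (hR : ∀ v, ¬ TransGen R v v) :
    WellFounded (TransGen R) :=
  haveI : IsTrans V (TransGen R) := ⟨fun _ _ _ => TransGen.trans⟩
  haveI : Std.Irrefl (TransGen R) := ⟨hR⟩
  Finite.wellFounded_of_trans_of_irrefl _

lemma IsLf.not_rel [Finite V] (h : IsLf R v) (w : V) : ¬ R v w :=
  Set.eq_empty_iff_forall_notMem.mp ((Set.ncard_eq_zero).mp h) w

lemma not_isLf_of_rel [Finite V] (h : R v w) : ¬ IsLf R v :=
  fun hv => hv.not_rel w h

lemma IsLf.eq_of_reflTransGen [Finite V] (h : IsLf R v) (hw : ReflTransGen R v w) : w = v :=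
  hw.cases_head.elim Eq.symm fun ⟨c, hc, _⟩ => (h.not_rel c hc).elim

lemma IsLf.ne_of_reflTransGen [Finite V] (hx : IsLf R x) (h : ReflTransGen R v y) (hxy : x ≠ y) :
    x ≠ v :=
  fun hxv => hxy (hx.eq_of_reflTransGen (hxv ▸ h)).symm

lemma IsPth.eq_of_isLf [Finite V] (h : IsPth R p a b) (ha : IsLf R a) : b = a :=
  ha.eq_of_reflTransGen (h.reflTransGen h.last_mem)

lemma IsPhyloNet.inDeg_eq_one (hnet : IsPhyloNet R) (h : IsLf R v) : inDeg R v = 1 := by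
  rcases hnet.2.2 v with ⟨-, h'⟩ | ⟨h', -⟩ | ⟨-, h'⟩ | ⟨h', -⟩ <;>
    first | exact h' | (rw [IsLf, h'] at h; omega)

lemma IsPhyloNet.exists_rel_of_isLf (hnet : IsPhyloNet R) (h : IsLf R v) : ∃ u, R u v :=
  Set.nonempty_of_ncard_ne_zero (ne_of_eq_of_ne (hnet.inDeg_eq_one h) one_ne_zero)

lemma IsPhyloNet.eq_of_rel_of_isLf (hnet : IsPhyloNet R) (h : IsLf R v) (hu : R u v) (hw : R w v) :
    u = w := by
  obtain ⟨c, hc⟩ := Set.ncard_eq_one.mp (hnet.inDeg_eq_one h)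
  have hu' : u ∈ {u | R u v} := hu
  have hw' : w ∈ {u | R u v} := hw
  rw [hc, Set.mem_singleton_iff] at hu' hw'
  rw [hu', hw']

lemma IsPhyloNet.exists_root [Finite V] (hnet : IsPhyloNet R) :
    ∃ r, ∀ v, ReflTransGen R r v := by
  obtain ⟨r, -, hr⟩ := hnet.2.1
  refine ⟨r, fun v => ?_⟩
  obtain ⟨a, hav, hmin⟩ :=
    (wellFounded_transGen hnet.1).has_min {a | ReflTransGen R a v} ⟨v, .refl⟩
  have ha : inDeg R a = 0 := by
    by_contra h0
    obtain ⟨b, hb⟩ := Set.nonempty_of_ncard_ne_zero h0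
    exact hmin b (ReflTransGen.head hb hav) (.single hb)
  exact hr a ha ▸ hav

lemma IsPhyloNet.eq_of_intDisj_of_isLf [Finite V] (hnet : IsPhyloNet R) (hl : IsLf R ℓ)
    (hp : IsPth R p u ℓ) (hq : IsPth R q v ℓ) (hpq : IntDisj p q) (hu : u ≠ ℓ) (hv : v ≠ ℓ) :
    u = v := by
  obtain ⟨m, hm, hmℓ⟩ := hp.dropLast hu
  obtain ⟨m', hm', hm'ℓ⟩ := hq.dropLast hv
  obtain rfl := hnet.eq_of_rel_of_isLf hl hmℓ hm'ℓ
  have hmp : m ∈ p := List.dropLast_subset _ hm.last_mem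
  have hmq : m ∈ q := List.dropLast_subset _ hm'.last_mem
  have hmℓ' : m ≠ ℓ := fun h => hnet.1 m (.single (h ▸ hmℓ))
  rcases hp.mem_cases hmp with rfl | h | h
  · rcases hq.mem_cases hmq with rfl | h | h
    · rfl
    · exact absurd h hmℓ'
    · exact absurd hmp (hpq.2 m h)
  · exact absurd h hmℓ'
  · exact absurd hmq (hpq.1 m h)

lemma ConsistentTrip.ne_of_isLf [Finite V] (hnet : IsPhyloNet R) (hx : IsLf R x) (hxy : x ≠ y)
    (h : ConsistentTrip R x y z) : x ≠ z := by
  rintro rfl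
  obtain ⟨u, v, p1, p2, p3, p4, huv, h1, h2, h3, h4, -, -, h14, -⟩ := h
  have hu : u ≠ x := by rintro rfl; exact hxy (h2.eq_of_isLf hx).symm
  have hv : v ≠ x := by rintro rfl; exact huv (h3.eq_of_isLf hx)
  exact huv (hnet.eq_of_intDisj_of_isLf hx h1 h4 h14 hu hv)

end Network

section CutArc

variable {V : Type*} {R : V → V → Prop} {p q : List V}
  {a b s t s₁ s₂ t₁ t₂ u₀ v₀ w x y z ℓ : V}

def adjWithoutArc (R : V → V → Prop) (u₀ v₀ : V) : V → V → Prop :=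
  fun p q => (R p q ∨ R q p) ∧ ¬((p = u₀ ∧ q = v₀) ∨ (p = v₀ ∧ q = u₀))

lemma reflTransGen_adjWithoutArc_symm (h : ReflTransGen (adjWithoutArc R u₀ v₀) a b) :
    ReflTransGen (adjWithoutArc R u₀ v₀) b a :=
  ReflTransGen.mono (fun _ _ ⟨hr, hne⟩ => ⟨hr.symm, by tauto⟩) _ _ (ReflTransGen.swap _ _ h)

lemma reflTransGen_adjWithoutArc_of_not_below (hab : ReflTransGen R a b)
    (hb : ¬ ReflTransGen R v₀ b) : ReflTransGen (adjWithoutArc R u₀ v₀) a b := by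
  induction hab with
  | refl => exact .refl
  | @tail c d _ hcd ih =>
    have hc : ¬ ReflTransGen R v₀ c := fun h => hb (h.tail hcd)
    refine (ih hc).tail ⟨Or.inl hcd, ?_⟩
    rintro (⟨-, rfl⟩ | ⟨rfl, -⟩)
    exacts [hb .refl, hc .refl]

lemma reflTransGen_adjWithoutArc_of_below (hR : ∀ v, ¬ TransGen R v v) (h₀ : R u₀ v₀)
    (hb : ReflTransGen R v₀ b) : ReflTransGen (adjWithoutArc R u₀ v₀) v₀ b := by
  induction hb with
  | refl => exact .refl
  | @tail c d hc hcd ih =>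
    refine ih.tail ⟨Or.inl hcd, ?_⟩
    rintro (⟨rfl, rfl⟩ | ⟨rfl, rfl⟩)
    exacts [not_reflTransGen_of_rel hR h₀ hc, not_reflTransGen_of_rel hR h₀ (.single hcd)]

variable [Finite V]

lemma CutArc.eq_of_rel (hnet : IsPhyloNet R) (hca : CutArc R u₀ v₀) (hab : R a b)
    (hb : ReflTransGen R v₀ b) (ha : ¬ ReflTransGen R v₀ a) : a = u₀ ∧ b = v₀ := by
  by_contra hne
  -- then every vertex stays connected to the root once the cut-arc is deleted
  obtain ⟨r, hr⟩ := hnet.exists_root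
  have hab' : adjWithoutArc R u₀ v₀ a b :=
    ⟨Or.inl hab, by rintro (h | ⟨rfl, -⟩); exacts [hne h, ha .refl]⟩
  have hconn : ∀ c, ReflTransGen (adjWithoutArc R u₀ v₀) r c := by
    intro c
    by_cases hc : ReflTransGen R v₀ c
    · have hvb := reflTransGen_adjWithoutArc_of_below hnet.1 hca.1 hb
      exact ((reflTransGen_adjWithoutArc_of_not_below (hr a) ha).tail hab').trans
        ((reflTransGen_adjWithoutArc_symm hvb).trans
          (reflTransGen_adjWithoutArc_of_below hnet.1 hca.1 hc))
    · exact reflTransGen_adjWithoutArc_of_not_below (hr c) hc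
  obtain ⟨-, c, d, hcd⟩ := hca
  exact hcd ((reflTransGen_adjWithoutArc_symm (hconn c)).trans (hconn d))

lemma CutArc.reflTransGen_source (hnet : IsPhyloNet R) (hca : CutArc R u₀ v₀)
    (hst : ReflTransGen R s t) (ht : ReflTransGen R v₀ t) (hs : ¬ ReflTransGen R v₀ s) :
    ReflTransGen R s u₀ := by
  induction hst using ReflTransGen.head_induction_on with
  | refl => exact absurd ht hs
  | @head c m hcm _ ih =>
    by_cases hm : ReflTransGen R v₀ m
    · rw [(hca.eq_of_rel hnet hcm hm hs).1]
    · exact (ih hm).head hcm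

lemma CutArc.mem_of_isPth (hnet : IsPhyloNet R) (hca : CutArc R u₀ v₀) (hp : IsPth R p s t)
    (ht : ReflTransGen R v₀ t) (hs : ¬ ReflTransGen R v₀ s) : v₀ ∈ p := by
  by_contra hv
  obtain ⟨l, rfl⟩ := hp.exists_eq_cons
  have hch : (s :: l).IsChain fun x y => R x y ∧ y ≠ v₀ :=
    List.IsChain.imp_of_mem_imp (fun _ _ _ hy hxy => ⟨hxy, fun h => hv (h ▸ hy)⟩) hp.isChain
  exact List.IsChain.induction (fun w => ¬ ReflTransGen R v₀ w) _ hch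
    (fun _ _ ⟨hxy, hy⟩ hx hy' => hy (hca.eq_of_rel hnet hxy hy' hx).2) (fun _ => hs)
    t hp.last_mem ht

lemma CutArc.not_intDisj (hnet : IsPhyloNet R) (hca : CutArc R u₀ v₀) (hp : IsPth R p s₁ t₁)
    (hq : IsPth R q s₂ t₂) (ht₁ : ReflTransGen R v₀ t₁) (ht₂ : ReflTransGen R v₀ t₂)
    (hs₁ : ¬ ReflTransGen R v₀ s₁) (hs₂ : ¬ ReflTransGen R v₀ s₂) (hne : t₁ ≠ v₀) :
    ¬ IntDisj p q := by
  intro hpq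
  rcases hp.mem_cases (hca.mem_of_isPth hnet hp ht₁ hs₁) with h | h | h
  · exact hs₁ (h ▸ .refl)
  · exact hne h.symm
  · exact hpq.1 v₀ h (hca.mem_of_isPth hnet hq ht₂ hs₂)

lemma CutArc.reflTransGen_of_intDisj (hnet : IsPhyloNet R) (hca : CutArc R u₀ v₀)
    (hp : IsPth R p s t₁) (hq : IsPth R q s t₂) (hpq : IntDisj p q) (ht₁ : ReflTransGen R v₀ t₁)
    (ht₂ : ReflTransGen R v₀ t₂) (hne : t₁ ≠ v₀) : ReflTransGen R v₀ s := by
  by_contra hs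
  exact hca.not_intDisj hnet hp hq ht₁ ht₂ hs hs hne hpq

lemma CutArc.not_consistentTrip (hnet : IsPhyloNet R) (hca : CutArc R u₀ v₀) (hx : IsLf R x)
    (hxz : x ≠ z) (hxv : ReflTransGen R v₀ x) (hzv : ReflTransGen R v₀ z)
    (hyv : ¬ ReflTransGen R v₀ y) : ¬ ConsistentTrip R x y z := by
  rintro ⟨u, v, p1, p2, p3, p4, -, h1, h2, h3, h4, -, -, h14, -⟩
  have hu : ¬ ReflTransGen R v₀ u := fun h => hyv (h.trans (h2.reflTransGen h2.last_mem))
  have hv : ¬ ReflTransGen R v₀ v := fun h => hu (h.trans (h3.reflTransGen h3.last_mem))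
  exact hca.not_intDisj hnet h1 h4 hxv hzv hu hv (hx.ne_of_reflTransGen hzv hxz) h14

lemma cutArc_of_isLf (hnet : IsPhyloNet R) (hl : IsLf R ℓ) (hu : R u₀ ℓ) : CutArc R u₀ ℓ := by
  refine ⟨hu, ℓ, u₀, fun h => ?_⟩
  rcases h.cases_head with h | ⟨c, ⟨hc | hc, hne⟩, -⟩
  · exact hnet.1 ℓ (.single (h ▸ hu))
  · exact hl.not_rel c hc
  · exact hne (Or.inr ⟨rfl, hnet.eq_of_rel_of_isLf hl hc hu⟩)

lemma exists_highestCutArc (hnet : IsPhyloNet R) (hl : IsLf R ℓ) :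
    ∃ u v, HighestCutArc R u v ∧ ReflTransGen R v ℓ := by
  obtain ⟨u, hu⟩ := hnet.exists_rel_of_isLf hl
  obtain ⟨u₁, ⟨v₁, hc₁, hv₁⟩, hmin⟩ := (wellFounded_transGen hnet.1).has_min
    {u | ∃ v, CutArc R u v ∧ ReflTransGen R v ℓ} ⟨u, ℓ, cutArc_of_isLf hnet hl hu, .refl⟩
  refine ⟨u₁, v₁, ⟨hc₁, fun u' v' hc' hv' => ?_⟩, hv₁⟩
  exact hmin u' ⟨v', hc', (hv'.tail hc₁.1).trans hv₁⟩ (TransGen.head' hc'.1 hv')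

lemma HighestCutArc.eq_of_reflTransGen (hnet : IsPhyloNet R) {u₁ v₁ u₂ v₂ : V}
    (h₁ : HighestCutArc R u₁ v₁) (h₂ : HighestCutArc R u₂ v₂) (hw₁ : ReflTransGen R v₁ w)
    (hw₂ : ReflTransGen R v₂ w) : (u₁, v₁) = (u₂, v₂) := by
  have below : ∀ {u₁ v₁ u₂ v₂ : V}, HighestCutArc R u₁ v₁ → HighestCutArc R u₂ v₂ →
      ReflTransGen R v₁ w → ReflTransGen R v₂ w → ReflTransGen R v₂ v₁ :=
    fun h₁ h₂ hw₁ hw₂ => by_contra fun h =>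
      h₂.2 _ _ h₁.1 (h₂.1.reflTransGen_source hnet hw₁ hw₂ h)
  obtain rfl := reflTransGen_antisymm hnet.1 (below h₂ h₁ hw₂ hw₁) (below h₁ h₂ hw₁ hw₂)
  rw [(h₂.1.eq_of_rel hnet h₁.1.1 .refl (not_reflTransGen_of_rel hnet.1 h₁.1.1)).1]

end CutArc

section Expansion

variable {V V' : Type*} {R : V → V → Prop} {R' : V' → V' → Prop} {g : V' → V × V}
  {π σ : List V'} {p m r : List V} {a c d s' : V'} {s t x : V}

lemma expandArc_inr_not_rel [Finite V] (hx : IsLf R x) :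
    ∀ w, ¬ ExpandArc R' R g (Sum.inr x) w
  | .inl _ => id
  | .inr b => fun h => hx.not_rel b h.1

lemma exists_expandArc_rel_inr (hnet' : IsPhyloNet R') (ha : IsLf R' a)
    (hxa : ReflTransGen R (g a).2 x) : ∃ w, ExpandArc R' R g w (Sum.inr x) := by
  rcases hxa.cases_tail with rfl | ⟨c, hc, hcx⟩
  · obtain ⟨b, hb⟩ := hnet'.exists_rel_of_isLf ha
    exact ⟨.inl b, a, hb, ha, rfl⟩
  · exact ⟨.inr c, hcx, a, ha, hc⟩

lemma IsPth.map_inr (hp : IsPth R p s t) (hc : IsLf R' c) (hs : ReflTransGen R (g c).2 s) :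
    IsPth (ExpandArc R' R g) (p.map Sum.inr) (Sum.inr s) (Sum.inr t) :=
  ⟨by simpa using hp.1, by simp [hp.2.1], by simp [hp.2.2.1],
    (List.isChain_map _).mpr <| hp.isChain.imp_of_mem_imp fun _ _ ha _ hab =>
      ⟨hab, c, hc, hs.trans (hp.reflTransGen ha)⟩⟩

lemma IsPth.map_inl [Finite V'] (hσ : IsPth R' σ s' d) (hd : ¬ IsLf R' d) :
    IsPth (ExpandArc R' R g) (σ.map Sum.inl) (Sum.inl s') (Sum.inl d) := by
  refine ⟨by simpa using hσ.1, by simp [hσ.2.1], by simp [hσ.2.2.1],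
    (List.isChain_map _).mpr <| hσ.isChain.imp_of_mem_imp fun _ b _ hb hab => ⟨hab, ?_⟩⟩
  rw [hσ.eq_dropLast_append, List.mem_append, List.mem_singleton] at hb
  rcases hb with hb | rfl
  · obtain ⟨c, hc⟩ := exists_rel_of_mem_dropLast hσ.isChain hb
    exact not_isLf_of_rel hc
  · exact hd

/-- `π` runs in `R'` to a collapsed leaf, which is replaced by the path `r` in the subnetwork of
`R` below it. -/
def expandPath (π : List V') (r : List V) : List (V' ⊕ V) :=
  π.dropLast.map Sum.inl ++ r.map Sum.inr

lemma isPth_expandPath [Finite V'] (hπ : IsPth R' π s' d) (hd : IsLf R' d) (hsd : s' ≠ d)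
    (hr : IsPth R r (g d).2 t) :
    IsPth (ExpandArc R' R g) (expandPath π r) (Sum.inl s') (Sum.inr t) := by
  obtain ⟨m, hm, hmd⟩ := hπ.dropLast hsd
  exact (hm.map_inl (not_isLf_of_rel hmd)).append (hr.map_inr hd .refl) ⟨d, hmd, hd, rfl⟩

lemma interior_expandPath (hπ : π.dropLast ≠ []) (hr : r ≠ []) :
    interior (expandPath π r) = (interior π).map Sum.inl ++ r.dropLast.map Sum.inr := by
  rw [expandPath, interior, List.tail_append_of_ne_nil (mt List.map_eq_nil_iff.mp hπ),
    List.dropLast_append_of_ne_nil (mt List.map_eq_nil_iff.mp hr), ← List.map_tail,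
    List.map_dropLast, List.tail_dropLast, interior]

lemma intDisj_expandPath {π₁ π₂ : List V'} {r₁ r₂ : List V} (hπ₁ : π₁.dropLast ≠ [])
    (hr₁ : r₁ ≠ []) (hπ₂ : π₂.dropLast ≠ []) (hr₂ : r₂ ≠ []) (hπ : IntDisj π₁ π₂)
    (hr : ∀ w ∈ r₁, w ∉ r₂) : IntDisj (expandPath π₁ r₁) (expandPath π₂ r₂) := by
  refine ⟨fun w hw hw' => ?_, fun w hw hw' => ?_⟩
  · rw [interior_expandPath hπ₁ hr₁] at hw
    rcases w with w | w <;> simp [expandPath, -List.map_dropLast] at hw hw'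
    exacts [hπ.1 w hw (List.dropLast_subset _ hw'), hr w (List.dropLast_subset _ hw) hw']
  · rw [interior_expandPath hπ₂ hr₂] at hw
    rcases w with w | w <;> simp [expandPath, -List.map_dropLast] at hw hw'
    exacts [hπ.2 w hw (List.dropLast_subset _ hw'), hr w hw' (List.dropLast_subset _ hw)]

lemma intDisj_expandPath_map_inl (hπ₀ : π.dropLast ≠ []) (hr : r ≠ []) (hπ : IntDisj π σ) :
    IntDisj (expandPath π r) (σ.map Sum.inl) := by
  refine ⟨fun w hw hw' => ?_, fun w hw hw' => ?_⟩
  · rw [interior_expandPath hπ₀ hr] at hw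
    rcases w with w | w <;> simp [-List.map_dropLast] at hw hw'
    exact hπ.1 w hw hw'
  · rw [interior_map] at hw
    rcases w with w | w <;> simp [expandPath, -List.map_dropLast] at hw hw'
    exact hπ.2 w hw (List.dropLast_subset _ hw')

lemma intDisj_expandPath_map_inr (hπ : π.dropLast ≠ []) (hr : r ≠ [])
    (h₁ : ∀ w ∈ r.dropLast, w ∉ m) (h₂ : ∀ w ∈ interior m, w ∉ r) :
    IntDisj (expandPath π r) (m.map Sum.inr) := by
  refine ⟨fun w hw hw' => ?_, fun w hw hw' => ?_⟩
  · rw [interior_expandPath hπ hr] at hw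
    rcases w with w | w <;> simp [-List.map_dropLast] at hw hw'
    exact h₁ w hw hw'
  · rw [interior_map] at hw
    rcases w with w | w <;> simp [expandPath, -List.map_dropLast] at hw hw'
    exact h₂ w hw hw'

end Expansion

section Cases

variable {V V' : Type*} {R : V → V → Prop} {R' : V' → V' → Prop} {g : V' → V × V}
  {a b c : V'} {x y z : V}

def SubnetsDisjoint (R : V → V → Prop) (R' : V' → V' → Prop) (g : V' → V × V) : Prop :=
  ∀ a b, IsLf R' a → IsLf R' b → a ≠ b → ∀ w,
    ReflTransGen R (g a).2 w → ¬ ReflTransGen R (g b).2 w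

lemma exists_isLf_reflTransGen_of_highestCutArc [Finite V] (hnet : IsPhyloNet R)
    (hg : ∀ u v, HighestCutArc R u v → ∃ b, IsLf R' b ∧ g b = (u, v)) (hx : IsLf R x) :
    ∃ a, IsLf R' a ∧ ReflTransGen R (g a).2 x := by
  obtain ⟨u, v, huv, hvx⟩ := exists_highestCutArc hnet hx
  obtain ⟨a, ha, hga⟩ := hg u v huv
  exact ⟨a, ha, by rwa [hga]⟩

lemma subnetsDisjoint_of_highestCutArc [Finite V] (hnet : IsPhyloNet R)
    (hg1 : ∀ b, IsLf R' b → HighestCutArc R (g b).1 (g b).2)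
    (hg2 : ∀ b b', IsLf R' b → IsLf R' b' → g b = g b' → b = b') : SubnetsDisjoint R R' g :=
  fun a b ha hb hab _ hwa hwb =>
    hab (hg2 a b ha hb ((hg1 a ha).eq_of_reflTransGen hnet (hg1 b hb) hwa hwb))

lemma consistentTrip_expandArc_self_left [Finite V] [Finite V'] (hnet : IsPhyloNet R)
    (hnet' : IsPhyloNet R') (hdisj : SubnetsDisjoint R R' g) (hx : IsLf R x) (ha : IsLf R' a)
    (hc : IsLf R' c) (hxa : ReflTransGen R (g a).2 x) (hzc : ReflTransGen R (g c).2 z) :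
    ConsistentTrip (ExpandArc R' R g) (Sum.inr x) (Sum.inr x) (Sum.inr z) := by
  have hxE := expandArc_inr_not_rel (R' := R') (g := g) hx
  rcases eq_or_ne x z with rfl | hxz
  · obtain ⟨w, hw⟩ := exists_expandArc_rel_inr hnet' ha hxa
    exact consistentTrip_of_intDisj hxE (fun h => hxE _ (h ▸ hw)) (isPth_pair hw)
      (isPth_pair hw) ⟨by simp [interior], by simp [interior]⟩
  rcases eq_or_ne a c with rfl | hac
  · obtain ⟨v, p, q, hv, hp, hq, hpq⟩ := exists_intDisj_of_reflTransGen hnet.1 hxa hzc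
    have hvx : v ≠ x := by rintro rfl; exact hxz (hq.eq_of_isLf hx).symm
    exact consistentTrip_of_intDisj hxE (by simpa using hvx) (hp.map_inr ha hv)
      (hq.map_inr ha hv) (hpq.map Sum.inr_injective)
  · obtain ⟨r', hr'⟩ := hnet'.exists_root
    obtain ⟨v, π₁, π₂, -, hπ₁, hπ₂, hπ⟩ :=
      exists_intDisj_of_reflTransGen hnet'.1 (hr' a) (hr' c)
    have hva : v ≠ a := by rintro rfl; exact hac (hπ₂.eq_of_isLf ha).symm
    have hvc : v ≠ c := by rintro rfl; exact hac (hπ₁.eq_of_isLf hc)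
    obtain ⟨r₁, hr₁⟩ := exists_isPth hxa
    obtain ⟨r₂, hr₂⟩ := exists_isPth hzc
    exact consistentTrip_of_intDisj hxE Sum.inl_ne_inr (isPth_expandPath hπ₁ ha hva hr₁)
      (isPth_expandPath hπ₂ hc hvc hr₂)
      (intDisj_expandPath (hπ₁.dropLast_ne_nil hva) hr₁.1 (hπ₂.dropLast_ne_nil hvc) hr₂.1 hπ
        fun w hw => hdisj a c ha hc hac w (hr₁.reflTransGen hw) ∘ hr₂.reflTransGen)

lemma consistentTrip_expandArc_of_eq_of_eq [Finite V] (hnet : IsPhyloNet R) (ha : IsLf R' a)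
    (hca : CutArc R (g a).1 (g a).2) (hx : IsLf R x) (hz : IsLf R z) (hxy : x ≠ y)
    (hzx : z ≠ x) (hxa : ReflTransGen R (g a).2 x) (hya : ReflTransGen R (g a).2 y)
    (hza : ReflTransGen R (g a).2 z) (h : ConsistentTrip R x y z) :
    ConsistentTrip (ExpandArc R' R g) (Sum.inr x) (Sum.inr y) (Sum.inr z) := by
  obtain ⟨u, v, p1, p2, p3, p4, huv, h1, h2, h3, h4, h12, h13, h14, h23, h24, h34⟩ := h
  have hu := hca.reflTransGen_of_intDisj hnet h1 h2 h12 hxa hya (hx.ne_of_reflTransGen hya hxy)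
  have hv := hca.reflTransGen_of_intDisj hnet h4 h3 h34.symm hza hu
    (hz.ne_of_reflTransGen hxa hzx)
  have hinj := @Sum.inr_injective V' V
  exact ⟨.inr u, .inr v, _, _, _, _, by simpa using huv, h1.map_inr ha hu, h2.map_inr ha hu,
    h3.map_inr ha hv, h4.map_inr ha hv, h12.map hinj, h13.map hinj, h14.map hinj, h23.map hinj,
    h24.map hinj, h34.map hinj⟩

lemma consistentTrip_expandArc_of_eq_of_ne [Finite V] [Finite V'] (hnet : IsPhyloNet R)
    (hnet' : IsPhyloNet R') (hdisj : SubnetsDisjoint R R' g) (ha : IsLf R' a) (hc : IsLf R' c)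
    (hac : a ≠ c) (hca : CutArc R (g a).1 (g a).2) (hx : IsLf R x) (hxy : x ≠ y)
    (hxa : ReflTransGen R (g a).2 x) (hya : ReflTransGen R (g a).2 y)
    (hzc : ReflTransGen R (g c).2 z) (h : ConsistentTrip R x y z) :
    ConsistentTrip (ExpandArc R' R g) (Sum.inr x) (Sum.inr y) (Sum.inr z) := by
  obtain ⟨u, v, p1, p2, p3, p4, -, h1, h2, h3, h4, h12, h13, -, h23, -, -⟩ := h
  have hu := hca.reflTransGen_of_intDisj hnet h1 h2 h12 hxa hya (hx.ne_of_reflTransGen hya hxy)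
  have hv : ¬ ReflTransGen R (g a).2 v := fun hv =>
    hdisj a c ha hc hac z (hv.trans (h4.reflTransGen h4.last_mem)) hzc
  -- `q` is the part of the path `v → u` below the cut-arc `g a`
  obtain ⟨q, hq, hq3⟩ := h3.exists_suffix (hca.mem_of_isPth hnet h3 hu hv)
  have hq_int : ∀ w ∈ q.dropLast, w ∈ interior p3 := by
    intro w hw
    have hwq := List.dropLast_subset _ hw
    rcases h3.mem_cases (hq3.subset hwq) with rfl | rfl | h
    · exact absurd (hq.reflTransGen hwq) hv
    · exact absurd hw (hq.last_notMem_dropLast hnet.1)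
    · exact h
  obtain ⟨r', hr'⟩ := hnet'.exists_root
  obtain ⟨v', π₁, π₂, -, hπ₁, hπ₂, hπ⟩ := exists_intDisj_of_reflTransGen hnet'.1 (hr' a) (hr' c)
  have hva : v' ≠ a := by rintro rfl; exact hac (hπ₂.eq_of_isLf ha).symm
  have hvc : v' ≠ c := by rintro rfl; exact hac (hπ₁.eq_of_isLf hc)
  obtain ⟨r, hr⟩ := exists_isPth hzc
  have hsep : ∀ w, ReflTransGen R (g a).2 w → w ∉ r :=
    fun w hw hw' => hdisj a c ha hc hac w hw (hr.reflTransGen hw')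
  have hnear : ∀ {p : List V} {t}, IsPth R p u t → IntDisj p p3 →
      IntDisj (p.map Sum.inr) (expandPath π₁ q) := fun _ hp =>
    (intDisj_expandPath_map_inr (hπ₁.dropLast_ne_nil hva) hq.1
      (fun w hw => hp.2 w (hq_int w hw)) (fun w hw hw' => hp.1 w hw (hq3.subset hw'))).symm
  have hfar : ∀ {p : List V} {t}, IsPth R p u t →
      IntDisj (p.map Sum.inr) (expandPath π₂ r) := fun hp =>
    (intDisj_expandPath_map_inr (hπ₂.dropLast_ne_nil hvc) hr.1
      (fun w hw hw' => hsep w (hu.trans (hp.reflTransGen hw')) (List.dropLast_subset _ hw))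
      (fun w hw => hsep w (hu.trans (hp.reflTransGen (interior_subset _ hw))))).symm
  exact ⟨.inr u, .inl v', _, _, _, _, Sum.inr_ne_inl, h1.map_inr ha hu, h2.map_inr ha hu,
    isPth_expandPath hπ₁ ha hva hq, isPth_expandPath hπ₂ hc hvc hr,
    h12.map Sum.inr_injective, hnear h1 h13, hfar h1, hnear h2 h23, hfar h2,
    intDisj_expandPath (hπ₁.dropLast_ne_nil hva) hq.1 (hπ₂.dropLast_ne_nil hvc) hr.1 hπ
      fun w hw => hsep w (hq.reflTransGen hw)⟩

lemma consistentTrip_expandArc_of_ne [Finite V'] (hdisj : SubnetsDisjoint R R' g) (ha : IsLf R' a)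
    (hb : IsLf R' b) (hc : IsLf R' c) (hab : a ≠ b) (hac : a ≠ c) (hbc : b ≠ c)
    (hxa : ReflTransGen R (g a).2 x) (hyb : ReflTransGen R (g b).2 y)
    (hzc : ReflTransGen R (g c).2 z) (h : ConsistentTrip R' a b c) :
    ConsistentTrip (ExpandArc R' R g) (Sum.inr x) (Sum.inr y) (Sum.inr z) := by
  obtain ⟨u, v, π1, π2, π3, π4, huv, h1, h2, h3, h4, h12, h13, h14, h23, h24, h34⟩ := h
  have hua : u ≠ a := by rintro rfl; exact hab (h2.eq_of_isLf ha).symm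
  have hub : u ≠ b := by rintro rfl; exact hab (h1.eq_of_isLf hb)
  have hvc : v ≠ c := by rintro rfl; exact huv (h3.eq_of_isLf hc)
  obtain ⟨r1, hr1⟩ := exists_isPth hxa
  obtain ⟨r2, hr2⟩ := exists_isPth hyb
  obtain ⟨r4, hr4⟩ := exists_isPth hzc
  have hsep : ∀ {d e : V'} {r r' : List V} {t t' : V}, IsLf R' d → IsLf R' e → d ≠ e →
      IsPth R r (g d).2 t → IsPth R r' (g e).2 t' → ∀ w ∈ r, w ∉ r' :=
    fun hd he hde hr hr' w hw hw' =>
      hdisj _ _ hd he hde w (hr.reflTransGen hw) (hr'.reflTransGen hw')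
  exact ⟨.inl u, .inl v, _, _, _, _, by simpa using huv, isPth_expandPath h1 ha hua hr1,
    isPth_expandPath h2 hb hub hr2, h3.map_inl fun hl => hua (h1.eq_of_isLf hl).symm,
    isPth_expandPath h4 hc hvc hr4,
    intDisj_expandPath (h1.dropLast_ne_nil hua) hr1.1 (h2.dropLast_ne_nil hub) hr2.1 h12
      (hsep ha hb hab hr1 hr2),
    intDisj_expandPath_map_inl (h1.dropLast_ne_nil hua) hr1.1 h13,
    intDisj_expandPath (h1.dropLast_ne_nil hua) hr1.1 (h4.dropLast_ne_nil hvc) hr4.1 h14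
      (hsep ha hc hac hr1 hr4),
    intDisj_expandPath_map_inl (h2.dropLast_ne_nil hub) hr2.1 h23,
    intDisj_expandPath (h2.dropLast_ne_nil hub) hr2.1 (h4.dropLast_ne_nil hvc) hr4.1 h24
      (hsep hb hc hbc hr2 hr4),
    (intDisj_expandPath_map_inl (h4.dropLast_ne_nil hvc) hr4.1 h34.symm).symm⟩

lemma consistentTrip_expandArc [Finite V] [Finite V'] (hnet : IsPhyloNet R) (hnet' : IsPhyloNet R')
    (hcut : ∀ a, IsLf R' a → CutArc R (g a).1 (g a).2) (hdisj : SubnetsDisjoint R R' g)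
    (hx : IsLf R x) (hy : IsLf R y) (hz : IsLf R z) (ha : IsLf R' a) (hb : IsLf R' b)
    (hc : IsLf R' c) (hxa : ReflTransGen R (g a).2 x) (hyb : ReflTransGen R (g b).2 y)
    (hzc : ReflTransGen R (g c).2 z) (h : ConsistentTrip R x y z)
    (h' : a ≠ b → a ≠ c → b ≠ c → ConsistentTrip R' a b c) :
    ConsistentTrip (ExpandArc R' R g) (Sum.inr x) (Sum.inr y) (Sum.inr z) := by
  rcases eq_or_ne x y with rfl | hxy
  · exact consistentTrip_expandArc_self_left hnet hnet' hdisj hx ha hc hxa hzc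
  have hxz := h.ne_of_isLf hnet hx hxy
  have hyz := h.swap.ne_of_isLf hnet hy hxy.symm
  rcases eq_or_ne a b with rfl | hab
  · rcases eq_or_ne a c with rfl | hac
    · exact consistentTrip_expandArc_of_eq_of_eq hnet ha (hcut a ha) hx hz hxy hxz.symm hxa
        hyb hzc h
    · exact consistentTrip_expandArc_of_eq_of_ne hnet hnet' hdisj ha hc hac (hcut a ha) hx hxy
        hxa hyb hzc h
  have hac : a ≠ c := by
    rintro rfl
    exact (hcut a ha).not_consistentTrip hnet hx hxz hxa hzc (hdisj b a hb ha hab.symm y hyb) h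
  have hbc : b ≠ c := by
    rintro rfl
    exact (hcut b hb).not_consistentTrip hnet hy hyz hyb hzc (hdisj a b ha hb hab x hxa) h.swap
  exact consistentTrip_expandArc_of_ne hdisj ha hb hc hab hac hbc hxa hyb hzc (h' hab hac hbc)

end Cases

end Phylo

open Phylo in
theorem stmt12_general {V V' : Type*} [Fintype V] [Fintype V']
    (R : V → V → Prop) (T : Set (V × V × V)) (R' : V' → V' → Prop) (g : V' → V × V)
    (hgood : GoodNet R)
    (hcons : ConsistentSet R T) (hL : netLeaves R = tripLeaves T)
    (hnet' : IsPhyloNet R')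
    (hg1 : ∀ b, IsLf R' b → HighestCutArc R (g b).1 (g b).2)
    (hg2 : ∀ b b', IsLf R' b → IsLf R' b' → g b = g b' → b = b')
    (hg3 : ∀ u v, HighestCutArc R u v → ∃ b, IsLf R' b ∧ g b = (u, v))
    (hcons' : ∀ a b c : V', IsLf R' a → IsLf R' b → IsLf R' c →
      a ≠ b → a ≠ c → b ≠ c →
      (∃ x ∈ leavesBelow R (g a).1 (g a).2, ∃ y ∈ leavesBelow R (g b).1 (g b).2,
        ∃ z ∈ leavesBelow R (g c).1 (g c).2, (x, y, z) ∈ T) →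
      ConsistentTrip R' a b c) :
    ∀ x y z : V, (x, y, z) ∈ T →
      ConsistentTrip (ExpandArc R' R g) (Sum.inr x) (Sum.inr y) (Sum.inr z) := by
  intro x y z hxyz
  have hnet := hgood.1
  have hleaf : ∀ w ∈ tripLeaves T, IsLf R w := fun w hw => (hL ▸ hw : w ∈ netLeaves R)
  have hx := hleaf x ⟨_, hxyz, Or.inl rfl⟩
  have hy := hleaf y ⟨_, hxyz, Or.inr (Or.inl rfl)⟩
  have hz := hleaf z ⟨_, hxyz, Or.inr (Or.inr rfl)⟩
  obtain ⟨a, ha, hxa⟩ := exists_isLf_reflTransGen_of_highestCutArc hnet hg3 hx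
  obtain ⟨b, hb, hyb⟩ := exists_isLf_reflTransGen_of_highestCutArc hnet hg3 hy
  obtain ⟨c, hc, hzc⟩ := exists_isLf_reflTransGen_of_highestCutArc hnet hg3 hz
  exact consistentTrip_expandArc hnet hnet' (fun d hd => (hg1 d hd).1)
    (subnetsDisjoint_of_highestCutArc hnet hg1 hg2) hx hy hz ha hb hc hxa hyb hzc
    (hcons _ hxyz) fun hab hac hbc => hcons' a b c ha hb hc hab hac hbc
      ⟨x, ⟨hx, hxa⟩, y, ⟨hy, hyb⟩, z, ⟨hz, hzc⟩, hxyz⟩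

open Phylo in
/-- Let `R` be a level-2 network consistent with the dense triplet set
`T`, and let `T' = CutInduce(N,T)` be the induced triplet set on the collapsed leaves
(which correspond bijectively, via `g`, to the highest cut-arcs of `R`). If `R'` is
any network consistent with `T'`, then the expansion of `R'` (replacing each
collapsed leaf by the subnetwork of `R` below the corresponding highest cut-arc) is
consistent with `T`. -/
theorem stmt12 {V V' : Type*} [Fintype V] [Fintype V']
    (R : V → V → Prop) (T : Set (V × V × V)) (R' : V' → V' → Prop) (g : V' → V × V)
    (hgood : GoodNet R) (hlev : LevelK 2 R) (hdense : DenseT T)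
    (hcons : ConsistentSet R T) (hL : netLeaves R = tripLeaves T)
    (hnet' : IsPhyloNet R')
    (hg1 : ∀ b, IsLf R' b → HighestCutArc R (g b).1 (g b).2)
    (hg2 : ∀ b b', IsLf R' b → IsLf R' b' → g b = g b' → b = b')
    (hg3 : ∀ u v, HighestCutArc R u v → ∃ b, IsLf R' b ∧ g b = (u, v))
    (hcons' : ∀ a b c : V', IsLf R' a → IsLf R' b → IsLf R' c →
      a ≠ b → a ≠ c → b ≠ c →
      (∃ x ∈ leavesBelow R (g a).1 (g a).2, ∃ y ∈ leavesBelow R (g b).1 (g b).2,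
        ∃ z ∈ leavesBelow R (g c).1 (g c).2, (x, y, z) ∈ T) →
      ConsistentTrip R' a b c) :
    ∀ x y z : V, (x, y, z) ∈ T →
      ConsistentTrip (ExpandArc R' R g) (Sum.inr x) (Sum.inr y) (Sum.inr z) :=
  stmt12_general R T R' g hgood hcons hL hnet' hg1 hg2 hg3 hcons'
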